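/- Let S and r be parameters with 0 < S < 4r, let u₀ be the standing wave, and let C > 0 be the constant such that lim_{x→+∞} |u₀'(x)|·e^{√S·x} = C. Define v₀(x) = u₀'(x)·∫₀ˣ (u₀'(z))⁻²·e^{−(4S/r)(u₀(z)² − u₀(z))} dz. Then lim_{x→+∞} |v₀(x)|·e^{−√S·x} = 1/(2C√S); in particular v₀ is unbounded on ℝ. -/

import Mathlib

/-!
Write `w = u₀'`. Near `+∞` the integrand `w⁻² · exp(-(4S/r)(u₀² - u₀))` behaves like
`C⁻² e^{2√S z}`, so its integral over `[0, x]` behaves like `e^{2√S x} / (2√S C²)`; multiplying by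
`|w x| ~ C e^{-√S x}` gives the limit, and unboundedness follows.

The integrand is only meaningful if `w` has no zero on `[0, ∞)`. This comes from the energy
`exp((4S/r)(u₀² - u₀)) · w²`, whose exponential factor cancels the `(2S/r)(2u₀ - 1)w²` term of
the equation, so that its derivative is `-2S · exp(…) · f(u₀) · w`. On `[0, ∞)` we have
`0 ≤ u₀ ≤ 1/2` and `w ≤ 0`, so the energy is nonincreasing there; it is positive near `+∞`, where
`w ≠ 0`, hence it is positive, and `w ≠ 0`, on all of `[0, ∞)`.
-/

open Real Filter Topology intervalIntegral

noncomputable def fpoly (u : ℝ) : ℝ := u * (2 * u - 1) * (1 - u)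

noncomputable def vzero (S r : ℝ) (u₀ : ℝ → ℝ) : ℝ → ℝ := fun x =>
  deriv u₀ x * ∫ z in (0:ℝ)..x,
    ((deriv u₀ z) ^ 2)⁻¹ * Real.exp (-(4 * S / r) * ((u₀ z) ^ 2 - u₀ z))

open Set

lemma integral_exp_const_mul {c : ℝ} (hc : c ≠ 0) (a b : ℝ) :
    ∫ z in a..b, exp (c * z) = (exp (c * b) - exp (c * a)) / c := by
  rw [integral_comp_mul_left (fun z => exp z) hc, integral_exp, smul_eq_mul]
  field_simp

lemma tendsto_exp_neg_mul_atTop_nhds_zero {c : ℝ} (hc : 0 < c) :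
    Tendsto (fun x => exp (-c * x)) atTop (𝓝 0) :=
  tendsto_exp_atBot.comp ((tendsto_const_mul_atBot_of_neg (neg_neg_of_pos hc)).2 tendsto_id)

lemma tendsto_exp_neg_mul_integral_mul_exp {c : ℝ} (hc : 0 < c) {g : ℝ → ℝ}
    (hg : ContinuousOn g (Ici 0)) (hlim : Tendsto g atTop (𝓝 0)) :
    Tendsto (fun x => exp (-c * x) * ∫ z in (0:ℝ)..x, g z * exp (c * z)) atTop (𝓝 0) := by
  rw [Metric.tendsto_nhds]
  intro ε hε
  obtain ⟨T₀, hT₀⟩ := Metric.tendsto_atTop.1 hlim (c * ε / 2) (by positivity)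
  set T := max T₀ 0
  have hT : 0 ≤ T := le_max_right _ _
  set A := |∫ z in (0:ℝ)..T, g z * exp (c * z)|
  have hdecay : Tendsto (fun x => A * exp (-c * x)) atTop (𝓝 0) := by
    simpa using (tendsto_exp_neg_mul_atTop_nhds_zero hc).const_mul A
  have hA := hdecay.eventually (gt_mem_nhds (half_pos hε))
  filter_upwards [eventually_ge_atTop T, hA] with x hTx hAx
  have hint : ∀ a b, 0 ≤ a → 0 ≤ b →
      IntervalIntegrable (fun z => g z * exp (c * z)) MeasureTheory.volume a b := fun a b ha hb =>
    ((hg.mono fun z hz => le_trans (le_min ha hb) hz.1).mul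
      (by fun_prop : Continuous fun z => exp (c * z)).continuousOn).intervalIntegrable
  have htail : |∫ z in T..x, g z * exp (c * z)| ≤ ε / 2 * exp (c * x) := by
    calc |∫ z in T..x, g z * exp (c * z)| ≤ ∫ z in T..x, c * ε / 2 * exp (c * z) := by
          rw [← Real.norm_eq_abs]
          refine norm_integral_le_of_norm_le hTx (Eventually.of_forall fun z hz => ?_)
            (Continuous.intervalIntegrable (by fun_prop) _ _)
          have hgz := hT₀ z (le_trans (le_max_left _ _) (le_of_lt hz.1))
          rw [dist_zero_right] at hgz
          rw [norm_mul, norm_of_nonneg (exp_pos _).le]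
          gcongr
      _ = ε / 2 * (exp (c * x) - exp (c * T)) := by
          rw [integral_const_mul, integral_exp_const_mul hc.ne']
          field_simp
      _ ≤ ε / 2 * exp (c * x) := by gcongr; linarith [exp_pos (c * T)]
  rw [dist_zero_right, norm_mul, norm_of_nonneg (exp_pos _).le, Real.norm_eq_abs,
    ← integral_add_adjacent_intervals (hint 0 T le_rfl hT) (hint T x hT (hT.trans hTx))]
  calc exp (-c * x) * |(∫ z in (0:ℝ)..T, g z * exp (c * z)) + ∫ z in T..x, g z * exp (c * z)|
      ≤ exp (-c * x) * (A + ε / 2 * exp (c * x)) := by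
        gcongr; exact (abs_add_le _ _).trans (by gcongr)
    _ = A * exp (-c * x) + ε / 2 := by
        rw [mul_add, mul_left_comm, ← exp_add, neg_mul, neg_add_cancel, exp_zero]; ring
    _ < ε := by linarith

lemma tendsto_integral_mul_exp_neg {c L : ℝ} (hc : 0 < c) {h : ℝ → ℝ}
    (hcont : ContinuousOn h (Ici 0))
    (hlim : Tendsto (fun z => h z * exp (-c * z)) atTop (𝓝 L)) :
    Tendsto (fun x => (∫ z in (0:ℝ)..x, h z) * exp (-c * x)) atTop (𝓝 (L / c)) := by
  set g : ℝ → ℝ := fun z => h z * exp (-c * z) - L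
  have hg : ContinuousOn g (Ici 0) :=
    (hcont.mul (by fun_prop : Continuous fun z => exp (-c * z)).continuousOn).sub continuousOn_const
  have hg0 : Tendsto g atTop (𝓝 0) := by simpa only [sub_self] using hlim.sub_const L
  have hgh : ∀ z, g z * exp (c * z) = h z - L * exp (c * z) := fun z => by
    simp only [g, neg_mul, exp_neg]
    field_simp
  have hsum := ((tendsto_exp_neg_mul_integral_mul_exp hc hg hg0).add_const (L / c)).sub
    ((tendsto_exp_neg_mul_atTop_nhds_zero hc).const_mul (L / c))
  rw [zero_add, mul_zero, sub_zero] at hsum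
  refine hsum.congr' ((eventually_ge_atTop 0).mono fun x hx => ?_)
  have hIh : IntervalIntegrable h MeasureTheory.volume 0 x :=
    (hcont.mono fun z hz => by simpa [hx] using hz.1).intervalIntegrable
  simp only [hgh]
  rw [integral_sub hIh (Continuous.intervalIntegrable (by fun_prop) _ _), integral_const_mul,
    integral_exp_const_mul hc.ne', mul_zero, exp_zero, neg_mul, exp_neg]
  field_simp
  ring

lemma tendsto_atTop_of_tendsto_mul_exp_neg {f : ℝ → ℝ} {a L : ℝ} (ha : 0 < a) (hL : 0 < L)
    (h : Tendsto (fun x => f x * exp (-a * x)) atTop (𝓝 L)) : Tendsto f atTop atTop :=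
  (h.pos_mul_atTop hL (tendsto_exp_atTop.comp (tendsto_id.const_mul_atTop ha))).congr fun x => by
    simp [mul_assoc, ← exp_add]

section StandingWave

variable {S r : ℝ} {u₀ : ℝ → ℝ}

noncomputable def waveEnergy (S r : ℝ) (u₀ : ℝ → ℝ) (x : ℝ) : ℝ :=
  exp ((4 * S / r) * (u₀ x ^ 2 - u₀ x)) * deriv u₀ x ^ 2

lemma hasDerivAt_waveEnergy (hu : ContDiff ℝ 2 u₀)
    (hode : ∀ x : ℝ, deriv (deriv u₀) x + S * fpoly (u₀ x)
      + (2 * S / r) * (2 * u₀ x - 1) * (deriv u₀ x) ^ 2 = 0) (x : ℝ) :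
    HasDerivAt (waveEnergy S r u₀)
      (-2 * S * exp ((4 * S / r) * (u₀ x ^ 2 - u₀ x)) * fpoly (u₀ x) * deriv u₀ x) x := by
  have hu' : HasDerivAt u₀ (deriv u₀ x) x := (hu.differentiable two_ne_zero x).hasDerivAt
  have hw' : HasDerivAt (deriv u₀) (deriv (deriv u₀) x) x :=
    ((hu.deriv' (n := 1)).differentiable one_ne_zero x).hasDerivAt
  refine ((((hu'.pow 2).sub hu').const_mul (4 * S / r)).exp.mul (hw'.pow 2)).congr_deriv ?_
  have hw'' : deriv (deriv u₀) x
      = -(S * fpoly (u₀ x) + (2 * S / r) * (2 * u₀ x - 1) * deriv u₀ x ^ 2) := by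
    linarith [hode x]
  simp only [Pi.pow_apply, Pi.sub_apply, hw'']
  push_cast
  ring

lemma antitoneOn_waveEnergy (hS : 0 ≤ S) (hu : ContDiff ℝ 2 u₀)
    (hode : ∀ x : ℝ, deriv (deriv u₀) x + S * fpoly (u₀ x)
      + (2 * S / r) * (2 * u₀ x - 1) * (deriv u₀ x) ^ 2 = 0)
    (hanti : Antitone u₀) (hhalf : u₀ 0 ≤ 1 / 2) (hnonneg : ∀ x, 0 ≤ u₀ x) :
    AntitoneOn (waveEnergy S r u₀) (Ici 0) := by
  refine antitoneOn_of_hasDerivWithinAt_nonpos (convex_Ici 0)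
    (fun x _ => (hasDerivAt_waveEnergy hu hode x).continuousAt.continuousWithinAt)
    (fun x _ => (hasDerivAt_waveEnergy hu hode x).hasDerivWithinAt) fun x hx => ?_
  rw [interior_Ici] at hx
  have hux : u₀ x ≤ 1 / 2 := (hanti (le_of_lt hx)).trans hhalf
  have hfpoly : fpoly (u₀ x) ≤ 0 :=
    mul_nonpos_of_nonpos_of_nonneg (mul_nonpos_of_nonneg_of_nonpos (hnonneg x) (by linarith))
      (by linarith)
  have hw : deriv u₀ x ≤ 0 := hanti.deriv_nonpos
  have : 0 ≤ S * exp ((4 * S / r) * (u₀ x ^ 2 - u₀ x)) * (fpoly (u₀ x) * deriv u₀ x) :=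
    mul_nonneg (mul_nonneg hS (exp_pos _).le) (mul_nonneg_of_nonpos_of_nonpos hfpoly hw)
  linarith

lemma deriv_ne_zero_of_antitoneOn_waveEnergy (hE : AntitoneOn (waveEnergy S r u₀) (Ici 0))
    (hev : ∀ᶠ x in atTop, deriv u₀ x ≠ 0) {x : ℝ} (hx : 0 ≤ x) : deriv u₀ x ≠ 0 := by
  obtain ⟨y, hy, hxy⟩ := (hev.and (eventually_ge_atTop x)).exists
  have hEy : 0 < waveEnergy S r u₀ y := mul_pos (exp_pos _) (by positivity)
  intro hx0
  have hEx : waveEnergy S r u₀ x = 0 := by simp [waveEnergy, hx0]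
  linarith [hE hx (hx.trans hxy : 0 ≤ y) hxy]

noncomputable def vzeroIntegrand (S r : ℝ) (u₀ : ℝ → ℝ) (z : ℝ) : ℝ :=
  ((deriv u₀ z) ^ 2)⁻¹ * exp (-(4 * S / r) * ((u₀ z) ^ 2 - u₀ z))

lemma vzero_eq_mul_integral_vzeroIntegrand (x : ℝ) :
    vzero S r u₀ x = deriv u₀ x * ∫ z in (0:ℝ)..x, vzeroIntegrand S r u₀ z := rfl

lemma vzeroIntegrand_nonneg (z : ℝ) : 0 ≤ vzeroIntegrand S r u₀ z :=
  mul_nonneg (inv_nonneg.2 (sq_nonneg _)) (exp_pos _).le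

lemma continuousOn_vzeroIntegrand {s : Set ℝ} (hu : ContDiff ℝ 1 u₀)
    (hw : ∀ z ∈ s, deriv u₀ z ≠ 0) : ContinuousOn (vzeroIntegrand S r u₀) s := by
  have hu₀ : Continuous u₀ := hu.continuous
  have hw₀ : Continuous (deriv u₀) := hu.continuous_deriv le_rfl
  exact (hw₀.pow 2).continuousOn.inv₀ (fun z hz => pow_ne_zero 2 (hw z hz)) |>.mul
    (by fun_prop : Continuous fun z => exp (-(4 * S / r) * (u₀ z ^ 2 - u₀ z))).continuousOn

lemma tendsto_vzeroIntegrand_mul_exp {a C : ℝ} (hlim0 : Tendsto u₀ atTop (𝓝 0)) (hC : C ≠ 0)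
    (hCasym : Tendsto (fun x => |deriv u₀ x| * exp (a * x)) atTop (𝓝 C)) :
    Tendsto (fun z => vzeroIntegrand S r u₀ z * exp (-(2 * a) * z)) atTop (𝓝 (C ^ 2)⁻¹) := by
  have hexp : Tendsto (fun z => exp (-(4 * S / r) * (u₀ z ^ 2 - u₀ z))) atTop (𝓝 1) := by
    simpa using ((hlim0.pow 2).sub hlim0).const_mul (-(4 * S / r)) |>.rexp
  have hinv := (hCasym.pow 2).inv₀ (pow_ne_zero 2 hC)
  refine (by simpa using hinv.mul hexp : Tendsto _ atTop (𝓝 (C ^ 2)⁻¹)).congr fun z => ?_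
  rw [vzeroIntegrand, mul_pow, sq_abs, ← exp_nat_mul]
  push_cast
  rw [mul_inv, ← exp_neg]
  ring_nf

end StandingWave

theorem vzero_asymptotics_general (S r : ℝ) (hS : 0 < S)
    (u₀ : ℝ → ℝ) (hu : ContDiff ℝ 2 u₀)
    (hode : ∀ x : ℝ, deriv (deriv u₀) x + S * fpoly (u₀ x)
      + (2 * S / r) * (2 * u₀ x - 1) * (deriv u₀ x) ^ 2 = 0)
    (hlim0 : Tendsto u₀ atTop (𝓝 0))
    (hnorm : u₀ 0 = 1 / 2) (hmono : StrictAnti u₀)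
    (hbound : ∀ x : ℝ, 0 < u₀ x ∧ u₀ x < 1)
    (C : ℝ) (hC : 0 < C)
    (hCasym : Tendsto (fun x : ℝ => |deriv u₀ x| * Real.exp (Real.sqrt S * x))
      atTop (𝓝 C)) :
    Tendsto (fun x : ℝ => |vzero S r u₀ x| * Real.exp (-(Real.sqrt S) * x)) atTop
        (𝓝 (1 / (2 * C * Real.sqrt S))) ∧
      ¬ ∃ M : ℝ, ∀ x : ℝ, |vzero S r u₀ x| ≤ M := by
  have ha : 0 < √S := sqrt_pos.2 hS
  have hE := antitoneOn_waveEnergy hS.le hu hode hmono.antitone hnorm.le fun x => (hbound x).1.le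
  have hw : ∀ z ∈ Ici 0, deriv u₀ z ≠ 0 := fun z hz =>
    deriv_ne_zero_of_antitoneOn_waveEnergy hE
      ((hCasym.eventually_ne hC.ne').mono fun x hx h0 => hx (by simp [h0])) hz
  have hJ := tendsto_integral_mul_exp_neg (h := vzeroIntegrand S r u₀) (by positivity : 0 < 2 * √S)
    (continuousOn_vzeroIntegrand (hu.of_le one_le_two) hw)
    (tendsto_vzeroIntegrand_mul_exp hlim0 hC.ne' hCasym)
  have hlim : Tendsto (fun x => |vzero S r u₀ x| * exp (-√S * x)) atTop
      (𝓝 (1 / (2 * C * √S))) := by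
    have hprod := hCasym.mul hJ
    rw [show C * ((C ^ 2)⁻¹ / (2 * √S)) = 1 / (2 * C * √S) by field_simp] at hprod
    refine hprod.congr' ((eventually_ge_atTop 0).mono fun x hx => ?_)
    dsimp only
    rw [vzero_eq_mul_integral_vzeroIntegrand, abs_mul,
      abs_of_nonneg (integral_nonneg hx fun z _ => vzeroIntegrand_nonneg z), mul_mul_mul_comm,
      ← exp_add]
    ring_nf
  refine ⟨hlim, fun ⟨M, hM⟩ => ?_⟩
  obtain ⟨x, hx⟩ :=
    ((tendsto_atTop_of_tendsto_mul_exp_neg ha (by positivity) hlim).eventually_gt_atTop M).exists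
  linarith [hM x]

theorem vzero_asymptotics (S r : ℝ) (hS : 0 < S) (hSr : S < 4 * r)
    (u₀ : ℝ → ℝ) (hu : ContDiff ℝ 2 u₀)
    (hode : ∀ x : ℝ, deriv (deriv u₀) x + S * fpoly (u₀ x)
      + (2 * S / r) * (2 * u₀ x - 1) * (deriv u₀ x) ^ 2 = 0)
    (hlim1 : Tendsto u₀ atBot (𝓝 1)) (hlim0 : Tendsto u₀ atTop (𝓝 0))
    (hnorm : u₀ 0 = 1 / 2) (hmono : StrictAnti u₀)
    (hbound : ∀ x : ℝ, 0 < u₀ x ∧ u₀ x < 1)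
    (C : ℝ) (hC : 0 < C)
    (hCasym : Tendsto (fun x : ℝ => |deriv u₀ x| * Real.exp (Real.sqrt S * x))
      atTop (𝓝 C)) :
    Tendsto (fun x : ℝ => |vzero S r u₀ x| * Real.exp (-(Real.sqrt S) * x)) atTop
        (𝓝 (1 / (2 * C * Real.sqrt S))) ∧
      ¬ ∃ M : ℝ, ∀ x : ℝ, |vzero S r u₀ x| ≤ M :=
  vzero_asymptotics_general S r hS u₀ hu hode hlim0 hnorm hmono hbound C hC hCasym
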